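/- Let Z ⊆ ℝⁿ be nonempty, compact and convex; let f : ℝⁿ → ℝ be differentiable with ∇f c-strongly monotone (⟨∇f(x) − ∇f(y), x − y⟩ ≥ c‖x − y‖² for all x, y ∈ ℝⁿ, c > 0) and L-Lipschitz on ℝⁿ; let g(z) = Gz + h with G a real m×n matrix and h ∈ ℝᵐ; let φ > 0 and set L_φ(z,μ) := f(z) + ⟨μ, Gz + h⟩ − (φ/2)‖μ‖². For step sizes ε₁, ε₂ > 0 define T̂(z,μ) := ( P_Z(z − ε₁(∇f(z) + Gᵀμ)), P₊(μ + ε₂(Gz + h − φμ)) ), where P_Z and P₊ are the nearest-point projections onto Z and ℝᵐ₊. Then there exist ε̄₁, ε̄₂ > 0 such that for every ε₁ ∈ (0, ε̄₁] and ε₂ ∈ (0, ε̄₂]: T̂ is a contraction with respect to the weighted Euclidean norm ‖(z,μ)‖_w := (‖z‖²/ε₁ + ‖μ‖²/ε₂)^{1/2}; consequently T̂ has a unique fixed point y*, and for any initial y(0) ∈ ℝⁿ × ℝᵐ the iterates y(k+1) := T̂(y(k)) converge geometrically to y*, i.e. there exist C ≥ 0 and Δ ∈ (0,1) with ‖y(k)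 − y*‖ ≤ C Δᵏ for all k. -/

import Mathlib

/-!
Nearest-point projections onto convex sets are nonexpansive, so `T̂` contracts as soon as its
unprojected part does. In the weighted norm the cross terms `∓2⟪G(z - z'), μ - μ'⟫` of the primal
and dual steps cancel exactly (this is what the weights `1/ε₁`, `1/ε₂` are for), leaving the
decrease `-2c‖z - z'‖² - 2φ‖μ - μ'‖²` from strong monotonicity and regularization against error
terms of order `ε`. For small steps the squared weighted distance therefore shrinks by the factor
`max (1 - cε₁) (1 - φε₂) < 1`. Rescaling the two components turns the weighted norm into the `L²`
norm of `WithLp 2 (ℝⁿ × ℝᵐ)`, where Banach's fixed point theorem applies.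
-/

open scoped InnerProductSpace Matrix

/-- The primal-dual projected gradient operator
`T̂(z,μ) = (P_Z(z − ε₁(∇f(z) + Gᵀμ)), P₊(μ + ε₂(Gz + h − φμ)))`. -/
noncomputable def primalDualMap {n m : ℕ}
    (PZ : EuclideanSpace ℝ (Fin n) → EuclideanSpace ℝ (Fin n))
    (Pp : EuclideanSpace ℝ (Fin m) → EuclideanSpace ℝ (Fin m))
    (f' : EuclideanSpace ℝ (Fin n) → EuclideanSpace ℝ (Fin n))
    (G : Matrix (Fin m) (Fin n) ℝ) (h : EuclideanSpace ℝ (Fin m)) (φ ε₁ ε₂ : ℝ)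
    (y : EuclideanSpace ℝ (Fin n) × EuclideanSpace ℝ (Fin m)) :
    EuclideanSpace ℝ (Fin n) × EuclideanSpace ℝ (Fin m) :=
  (PZ (y.1 - ε₁ • (f' y.1 + Matrix.toEuclideanLin Gᵀ y.2)),
   Pp (y.2 + ε₂ • (Matrix.toEuclideanLin G y.1 + h - φ • y.2)))

/-- The weighted Euclidean norm `‖(z,μ)‖_w = (‖z‖²/ε₁ + ‖μ‖²/ε₂)^{1/2}`. -/
noncomputable def wNorm {n m : ℕ} (ε₁ ε₂ : ℝ)
    (y : EuclideanSpace ℝ (Fin n) × EuclideanSpace ℝ (Fin m)) : ℝ :=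
  Real.sqrt (‖y.1‖ ^ 2 / ε₁ + ‖y.2‖ ^ 2 / ε₂)

open scoped InnerProduct

section NearestPoint

variable {E : Type*} [NormedAddCommGroup E] [InnerProductSpace ℝ E] {K : Set E} {P : E → E}

theorem real_inner_sub_nearest_le_zero (hK : Convex ℝ K)
    (hP : ∀ x, P x ∈ K ∧ ∀ y ∈ K, ‖x - P x‖ ≤ ‖x - y‖) (x : E) {w : E} (hw : w ∈ K) :
    ⟪x - P x, w - P x⟫_ℝ ≤ 0 := by
  have : Nonempty K := ⟨⟨P x, (hP x).1⟩⟩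
  refine (norm_eq_iInf_iff_real_inner_le_zero hK (hP x).1).1 ?_ w hw
  exact le_antisymm (le_ciInf fun w => (hP x).2 w w.2)
    (ciInf_le ⟨0, Set.forall_mem_range.2 fun w : K => norm_nonneg (x - w)⟩ ⟨P x, (hP x).1⟩)

theorem norm_sub_le_of_nearest (hK : Convex ℝ K)
    (hP : ∀ x, P x ∈ K ∧ ∀ y ∈ K, ‖x - P x‖ ≤ ‖x - y‖) (x y : E) :
    ‖P x - P y‖ ≤ ‖x - y‖ := by
  have hx := real_inner_sub_nearest_le_zero hK hP x (hP y).1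
  have hy := real_inner_sub_nearest_le_zero hK hP y (hP x).1
  have firm : ‖P x - P y‖ ^ 2 ≤ ⟪x - y, P x - P y⟫_ℝ := by
    rw [← real_inner_self_eq_norm_sq]
    simp only [inner_sub_left, inner_sub_right, real_inner_comm] at hx hy ⊢
    linarith
  nlinarith [real_inner_le_norm (x - y) (P x - P y), norm_nonneg (P x - P y),
    norm_nonneg (x - y)]

end NearestPoint

theorem convex_nonneg_orthant (m : ℕ) :
    Convex ℝ {v : EuclideanSpace ℝ (Fin m) | ∀ j, 0 ≤ v j} :=
  fun _ hv _ hw a b ha hb _ j => by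
    simpa using add_nonneg (mul_nonneg ha (hv j)) (mul_nonneg hb (hw j))

theorem norm_add_sq_le_of_le {G : Type*} [SeminormedAddGroup G] {a b : G} {α β : ℝ}
    (ha : ‖a‖ ^ 2 ≤ α) (hb : ‖b‖ ^ 2 ≤ β) : ‖a + b‖ ^ 2 ≤ 2 * (α + β) :=
  calc ‖a + b‖ ^ 2 ≤ (‖a‖ + ‖b‖) ^ 2 := by gcongr; exact norm_add_le a b
    _ ≤ 2 * (‖a‖ ^ 2 + ‖b‖ ^ 2) := add_sq_le
    _ ≤ 2 * (α + β) := by gcongr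

section StepEstimates

variable {E F : Type*} [NormedAddCommGroup E] [InnerProductSpace ℝ E]
  [NormedAddCommGroup F] [InnerProductSpace ℝ F] (A : E →L[ℝ] F)
  {c L φ ε₁ ε₂ : ℝ} {dz df : E} {dμ : F}

theorem norm_dual_step_sq_div_le (hε₂ : 0 < ε₂) :
    ‖dμ + ε₂ • (A dz - φ • dμ)‖ ^ 2 / ε₂ ≤ ‖dμ‖ ^ 2 / ε₂ + 2 * ⟪A dz, dμ⟫_ℝ
      - 2 * φ * ‖dμ‖ ^ 2 + 2 * ε₂ * (‖A‖ ^ 2 * ‖dz‖ ^ 2 + φ ^ 2 * ‖dμ‖ ^ 2) := by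
  have expand : ‖dμ + ε₂ • (A dz - φ • dμ)‖ ^ 2 / ε₂ = ‖dμ‖ ^ 2 / ε₂
      + 2 * (⟪A dz, dμ⟫_ℝ - φ * ‖dμ‖ ^ 2) + ε₂ * ‖A dz + -(φ • dμ)‖ ^ 2 := by
    rw [← sub_eq_add_neg, norm_add_sq_real, real_inner_smul_right, inner_sub_right,
      real_inner_smul_right, real_inner_self_eq_norm_sq, real_inner_comm, norm_smul,
      Real.norm_of_nonneg hε₂.le]
    field_simp
  have hAdz : ‖A dz‖ ^ 2 ≤ ‖A‖ ^ 2 * ‖dz‖ ^ 2 := by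
    rw [← mul_pow]; exact pow_le_pow_left₀ (norm_nonneg _) (A.le_opNorm dz) 2
  have hφdμ : ‖-(φ • dμ)‖ ^ 2 ≤ φ ^ 2 * ‖dμ‖ ^ 2 := by
    rw [norm_neg, norm_smul, mul_pow, Real.norm_eq_abs, sq_abs]
  have hsum := mul_le_mul_of_nonneg_left (norm_add_sq_le_of_le hAdz hφdμ) hε₂.le
  linarith

variable [CompleteSpace E] [CompleteSpace F]

theorem norm_primal_step_sq_div_le (hε₁ : 0 < ε₁) (hmono : c * ‖dz‖ ^ 2 ≤ ⟪df, dz⟫_ℝ)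
    (hlip : ‖df‖ ≤ L * ‖dz‖) :
    ‖dz - ε₁ • (df + (A†) dμ)‖ ^ 2 / ε₁ ≤ ‖dz‖ ^ 2 / ε₁ - 2 * c * ‖dz‖ ^ 2
      - 2 * ⟪A dz, dμ⟫_ℝ + 2 * ε₁ * (L ^ 2 * ‖dz‖ ^ 2 + ‖A‖ ^ 2 * ‖dμ‖ ^ 2) := by
  have expand : ‖dz - ε₁ • (df + (A†) dμ)‖ ^ 2 / ε₁ = ‖dz‖ ^ 2 / ε₁
      - 2 * (⟪df, dz⟫_ℝ + ⟪A dz, dμ⟫_ℝ) + ε₁ * ‖df + (A†) dμ‖ ^ 2 := by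
    rw [norm_sub_sq_real, real_inner_smul_right, inner_add_right,
      ContinuousLinearMap.adjoint_inner_right, real_inner_comm dz, norm_smul,
      Real.norm_of_nonneg hε₁.le]
    field_simp
  have hdf : ‖df‖ ^ 2 ≤ L ^ 2 * ‖dz‖ ^ 2 := by
    rw [← mul_pow]; exact pow_le_pow_left₀ (norm_nonneg _) hlip 2
  have hAdμ : ‖(A†) dμ‖ ^ 2 ≤ ‖A‖ ^ 2 * ‖dμ‖ ^ 2 := by
    rw [← mul_pow, ← ContinuousLinearMap.adjoint.norm_map A]
    exact pow_le_pow_left₀ (norm_nonneg _) ((A†).le_opNorm dμ) 2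
  have hsum := mul_le_mul_of_nonneg_left (norm_add_sq_le_of_le hdf hAdμ) hε₁.le
  linarith

theorem primalDual_step_le (hε₁ : 0 < ε₁) (hε₂ : 0 < ε₂)
    (hmono : c * ‖dz‖ ^ 2 ≤ ⟪df, dz⟫_ℝ) (hlip : ‖df‖ ≤ L * ‖dz‖)
    (hcon₁ : ε₁ * L ^ 2 + ε₂ * ‖A‖ ^ 2 ≤ c / 2) (hcon₂ : ε₁ * ‖A‖ ^ 2 + ε₂ * φ ^ 2 ≤ φ / 2) :
    ‖dz - ε₁ • (df + (A†) dμ)‖ ^ 2 / ε₁ + ‖dμ + ε₂ • (A dz - φ • dμ)‖ ^ 2 / ε₂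
      ≤ max (1 - c * ε₁) (1 - φ * ε₂) * (‖dz‖ ^ 2 / ε₁ + ‖dμ‖ ^ 2 / ε₂) := by
  have hprimal := norm_primal_step_sq_div_le A (dμ := dμ) hε₁ hmono hlip
  have hdual := norm_dual_step_sq_div_le A (dz := dz) (φ := φ) (dμ := dμ) hε₂
  have hu := mul_le_mul_of_nonneg_right hcon₁ (sq_nonneg ‖dz‖)
  have hv := mul_le_mul_of_nonneg_right hcon₂ (sq_nonneg ‖dμ‖)
  calc _ ≤ (1 - c * ε₁) * (‖dz‖ ^ 2 / ε₁) + (1 - φ * ε₂) * (‖dμ‖ ^ 2 / ε₂) := by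
        have e₁ : (1 - c * ε₁) * (‖dz‖ ^ 2 / ε₁) = ‖dz‖ ^ 2 / ε₁ - c * ‖dz‖ ^ 2 := by
          field_simp
        have e₂ : (1 - φ * ε₂) * (‖dμ‖ ^ 2 / ε₂) = ‖dμ‖ ^ 2 / ε₂ - φ * ‖dμ‖ ^ 2 := by
          field_simp
        linarith
    _ ≤ _ := by
        rw [mul_add]
        gcongr
        exacts [le_max_left _ _, le_max_right _ _]

end StepEstimates

theorem Equiv.exists_fixedPoint_of_dist_le {X Y : Type*} [Nonempty X] [MetricSpace Y]
    [CompleteSpace Y] (e : X ≃ Y) {T : X → X} {K : ℝ} (hK₀ : 0 ≤ K) (hK : K < 1)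
    (hT : ∀ x x', dist (e (T x)) (e (T x')) ≤ K * dist (e x) (e x')) :
    ∃ x₀, T x₀ = x₀ ∧ (∀ x, T x = x → x = x₀) ∧
      ∀ x (k : ℕ), dist (e (T^[k] x)) (e x₀) ≤ dist (e x) (e x₀) * K ^ k := by
  have : Nonempty Y := e.symm.nonempty
  have hT' : ContractingWith ⟨K, hK₀⟩ (e ∘ T ∘ e.symm) :=
    ⟨hK, LipschitzWith.of_dist_le_mul fun y y' => by
      have := hT (e.symm y) (e.symm y')
      rwa [Equiv.apply_symm_apply, Equiv.apply_symm_apply] at this⟩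
  set x₀ := e.symm (ContractingWith.fixedPoint _ hT')
  have hfix (x : X) : T x = x ↔ e x = ContractingWith.fixedPoint _ hT' := by
    refine ⟨fun hx => hT'.fixedPoint_unique (by simp [Function.IsFixedPt, hx]), fun hx => ?_⟩
    have := hT'.fixedPoint_isFixedPt
    rw [← hx] at this
    simpa [Function.IsFixedPt] using this
  refine ⟨x₀, (hfix x₀).2 (by simp [x₀]), fun x hx => by simp [x₀, ← (hfix x).1 hx], ?_⟩
  intro x k
  induction k with
  | zero => simp
  | succ k ih =>
    calc dist (e (T^[k + 1] x)) (e x₀) = dist (e (T (T^[k] x))) (e (T x₀)) := by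
          rw [Function.iterate_succ_apply', (hfix x₀).2 (by simp [x₀])]
      _ ≤ K * (dist (e x) (e x₀) * K ^ k) := (hT _ _).trans (by gcongr)
      _ = dist (e x) (e x₀) * K ^ (k + 1) := by ring

section WeightedNorm

variable {E F : Type*} [NormedAddCommGroup E] [InnerProductSpace ℝ E]
  [NormedAddCommGroup F] [InnerProductSpace ℝ F] {ε₁ ε₂ : ℝ}

variable (E F) in
noncomputable def weightedEquiv (hε₁ : 0 < ε₁) (hε₂ : 0 < ε₂) :
    (E × F) ≃ₗ[ℝ] WithLp 2 (E × F) :=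
  (LinearEquiv.prodCongr (.smulOfNeZero ℝ E (√ε₁)⁻¹ (by positivity))
    (.smulOfNeZero ℝ F (√ε₂)⁻¹ (by positivity))).trans (WithLp.linearEquiv 2 ℝ (E × F)).symm

theorem norm_weightedEquiv (hε₁ : 0 < ε₁) (hε₂ : 0 < ε₂) (y : E × F) :
    ‖weightedEquiv E F hε₁ hε₂ y‖ = √(‖y.1‖ ^ 2 / ε₁ + ‖y.2‖ ^ 2 / ε₂) := by
  simp [weightedEquiv, WithLp.prod_norm_eq_of_L2, norm_smul, mul_pow, div_eq_inv_mul,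
    hε₁.le, hε₂.le]

end WeightedNorm

theorem Matrix.toEuclideanLin_transpose_apply {m n : ℕ} (G : Matrix (Fin m) (Fin n) ℝ)
    (μ : EuclideanSpace ℝ (Fin m)) :
    Matrix.toEuclideanLin Gᵀ μ = ((Matrix.toEuclideanLin G).toContinuousLinearMap†) μ := by
  rw [← Matrix.conjTranspose_eq_transpose_of_trivial,
    Matrix.toEuclideanLin_conjTranspose_eq_adjoint]
  rfl

section PrimalDualMap

variable {n m : ℕ} {PZ : EuclideanSpace ℝ (Fin n) → EuclideanSpace ℝ (Fin n)}
  {Pp : EuclideanSpace ℝ (Fin m) → EuclideanSpace ℝ (Fin m)}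
  {f' : EuclideanSpace ℝ (Fin n) → EuclideanSpace ℝ (Fin n)}
  {G : Matrix (Fin m) (Fin n) ℝ} {h : EuclideanSpace ℝ (Fin m)} {c L φ ε₁ ε₂ : ℝ}

theorem dist_weightedEquiv (hε₁ : 0 < ε₁) (hε₂ : 0 < ε₂)
    (y y' : EuclideanSpace ℝ (Fin n) × EuclideanSpace ℝ (Fin m)) :
    dist (weightedEquiv _ _ hε₁ hε₂ y) (weightedEquiv _ _ hε₁ hε₂ y') = wNorm ε₁ ε₂ (y - y') := by
  rw [dist_eq_norm, ← map_sub, norm_weightedEquiv, wNorm]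

theorem wNorm_primalDualMap_sub_le (hPZ : ∀ a b, ‖PZ a - PZ b‖ ≤ ‖a - b‖)
    (hPp : ∀ a b, ‖Pp a - Pp b‖ ≤ ‖a - b‖)
    (hmono : ∀ x y, c * ‖x - y‖ ^ 2 ≤ ⟪f' x - f' y, x - y⟫_ℝ)
    (hlip : ∀ x y, ‖f' x - f' y‖ ≤ L * ‖x - y‖) (hε₁ : 0 < ε₁) (hε₂ : 0 < ε₂)
    (hcon₁ : ε₁ * L ^ 2 + ε₂ * ‖(Matrix.toEuclideanLin G).toContinuousLinearMap‖ ^ 2 ≤ c / 2)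
    (hcon₂ : ε₁ * ‖(Matrix.toEuclideanLin G).toContinuousLinearMap‖ ^ 2 + ε₂ * φ ^ 2 ≤ φ / 2)
    (y y' : EuclideanSpace ℝ (Fin n) × EuclideanSpace ℝ (Fin m)) :
    wNorm ε₁ ε₂ (primalDualMap PZ Pp f' G h φ ε₁ ε₂ y - primalDualMap PZ Pp f' G h φ ε₁ ε₂ y')
      ≤ √(max (1 - c * ε₁) (1 - φ * ε₂)) * wNorm ε₁ ε₂ (y - y') := by
  set A := (Matrix.toEuclideanLin G).toContinuousLinearMap
  have hprimal : (y.1 - ε₁ • (f' y.1 + Matrix.toEuclideanLin Gᵀ y.2))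
      - (y'.1 - ε₁ • (f' y'.1 + Matrix.toEuclideanLin Gᵀ y'.2))
      = (y - y').1 - ε₁ • ((f' y.1 - f' y'.1) + (A†) (y - y').2) := by
    simp only [Matrix.toEuclideanLin_transpose_apply, Prod.fst_sub, Prod.snd_sub, map_sub]
    module
  have hdual : (y.2 + ε₂ • (Matrix.toEuclideanLin G y.1 + h - φ • y.2))
      - (y'.2 + ε₂ • (Matrix.toEuclideanLin G y'.1 + h - φ • y'.2))
      = (y - y').2 + ε₂ • (A (y - y').1 - φ • (y - y').2) := by
    simp only [A, LinearMap.coe_toContinuousLinearMap', Prod.fst_sub, Prod.snd_sub, map_sub]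
    module
  rw [wNorm, wNorm, ← Real.sqrt_mul' _ (by positivity)]
  refine Real.sqrt_le_sqrt (le_trans ?_ (primalDual_step_le A hε₁ hε₂
    (hmono y.1 y'.1) (hlip y.1 y'.1) hcon₁ hcon₂))
  gcongr ?_ ^ 2 / ε₁ + ?_ ^ 2 / ε₂
  · exact (hPZ _ _).trans_eq (congrArg norm hprimal)
  · exact (hPp _ _).trans_eq (congrArg norm hdual)

end PrimalDualMap

theorem exists_stepSize_le {c φ L M : ℝ} (hc : 0 < c) (hφ : 0 < φ) :
    ∃ ε > 0, ∀ ε₁ ε₂ : ℝ, 0 < ε₁ → ε₁ ≤ ε → 0 < ε₂ → ε₂ ≤ ε →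
      ε₁ * L ^ 2 + ε₂ * M ^ 2 ≤ c / 2 ∧ ε₁ * M ^ 2 + ε₂ * φ ^ 2 ≤ φ / 2 := by
  set S := L ^ 2 + M ^ 2 + φ ^ 2 + 1
  have hS : 0 < S := by positivity
  refine ⟨min c φ / (2 * S), by positivity, fun ε₁ ε₂ hε₁ hε₁le hε₂ hε₂le => ?_⟩
  have hε : min c φ / (2 * S) * S ≤ c / 2 ∧ min c φ / (2 * S) * S ≤ φ / 2 := by
    rw [div_mul_eq_mul_div, mul_div_mul_right _ _ hS.ne']
    exact ⟨by gcongr; exact min_le_left c φ, by gcongr; exact min_le_right c φ⟩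
  constructor <;> nlinarith [sq_nonneg L, sq_nonneg M, sq_nonneg φ]

theorem primalDual_contraction_general {n m : ℕ}
    (Z : Set (EuclideanSpace ℝ (Fin n)))
    (hZconv : Convex ℝ Z)
    (f' : EuclideanSpace ℝ (Fin n) → EuclideanSpace ℝ (Fin n))
    (c L : ℝ) (hc : 0 < c)
    (hmono : ∀ x y, c * ‖x - y‖ ^ 2 ≤ ⟪f' x - f' y, x - y⟫_ℝ)
    (hlip : ∀ x y, ‖f' x - f' y‖ ≤ L * ‖x - y‖)
    (G : Matrix (Fin m) (Fin n) ℝ) (h : EuclideanSpace ℝ (Fin m))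
    (φ : ℝ) (hφ : 0 < φ)
    -- nearest-point projections onto Z and onto the nonnegative orthant
    (PZ : EuclideanSpace ℝ (Fin n) → EuclideanSpace ℝ (Fin n))
    (hPZ : ∀ x, PZ x ∈ Z ∧ ∀ y ∈ Z, ‖x - PZ x‖ ≤ ‖x - y‖)
    (Pp : EuclideanSpace ℝ (Fin m) → EuclideanSpace ℝ (Fin m))
    (hPp : ∀ x, (∀ j, 0 ≤ Pp x j) ∧
      ∀ y : EuclideanSpace ℝ (Fin m), (∀ j, 0 ≤ y j) → ‖x - Pp x‖ ≤ ‖x - y‖) :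
    ∃ ε₁max > (0:ℝ), ∃ ε₂max > (0:ℝ), ∀ ε₁ ε₂ : ℝ,
      0 < ε₁ → ε₁ ≤ ε₁max → 0 < ε₂ → ε₂ ≤ ε₂max →
      (∃ Δ : ℝ, 0 ≤ Δ ∧ Δ < 1 ∧
        ∀ y y' : EuclideanSpace ℝ (Fin n) × EuclideanSpace ℝ (Fin m),
          wNorm ε₁ ε₂ (primalDualMap PZ Pp f' G h φ ε₁ ε₂ y -
              primalDualMap PZ Pp f' G h φ ε₁ ε₂ y') ≤ Δ * wNorm ε₁ ε₂ (y - y')) ∧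
      (∃ ys : EuclideanSpace ℝ (Fin n) × EuclideanSpace ℝ (Fin m),
        primalDualMap PZ Pp f' G h φ ε₁ ε₂ ys = ys ∧
        (∀ y', primalDualMap PZ Pp f' G h φ ε₁ ε₂ y' = y' → y' = ys) ∧
        ∀ y0 : EuclideanSpace ℝ (Fin n) × EuclideanSpace ℝ (Fin m),
          ∃ C : ℝ, 0 ≤ C ∧ ∃ Δ : ℝ, 0 < Δ ∧ Δ < 1 ∧
            ∀ k : ℕ, wNorm ε₁ ε₂ ((primalDualMap PZ Pp f' G h φ ε₁ ε₂)^[k] y0 - ys) ≤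
              C * Δ ^ k) := by
  set A := (Matrix.toEuclideanLin G).toContinuousLinearMap
  obtain ⟨ε, hε, hcon⟩ := exists_stepSize_le (L := L) (M := ‖A‖) hc hφ
  refine ⟨ε, hε, ε, hε, fun ε₁ ε₂ hε₁ hε₁le hε₂ hε₂le => ?_⟩
  obtain ⟨hcon₁, hcon₂⟩ := hcon ε₁ ε₂ hε₁ hε₁le hε₂ hε₂le
  set D := max (1 - c * ε₁) (1 - φ * ε₂)
  -- `hcon₂` forces `φ * ε₂ ≤ 1 / 2`
  have hD₀ : 0 < D := lt_max_of_lt_right (by nlinarith)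
  have hD₁ : D < 1 := max_lt (by nlinarith) (by nlinarith)
  have hΔ : √D < 1 := by rwa [Real.sqrt_lt' one_pos, one_pow]
  set T := primalDualMap PZ Pp f' G h φ ε₁ ε₂
  have hT : ∀ y y', wNorm ε₁ ε₂ (T y - T y') ≤ √D * wNorm ε₁ ε₂ (y - y') :=
    wNorm_primalDualMap_sub_le (h := h) (norm_sub_le_of_nearest hZconv hPZ)
    (norm_sub_le_of_nearest (convex_nonneg_orthant m) hPp) hmono hlip hε₁ hε₂ hcon₁ hcon₂
  obtain ⟨ys, hfix, huniq, hiter⟩ :=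
    (weightedEquiv _ _ hε₁ hε₂).toEquiv.exists_fixedPoint_of_dist_le (T := T)
      (Real.sqrt_nonneg D) hΔ fun y y' => by
        simpa only [LinearEquiv.coe_toEquiv, dist_weightedEquiv] using hT y y'
  refine ⟨⟨√D, Real.sqrt_nonneg D, hΔ, hT⟩, ys, hfix, huniq, fun y₀ =>
    ⟨wNorm ε₁ ε₂ (y₀ - ys), Real.sqrt_nonneg _, √D, Real.sqrt_pos.2 hD₀, hΔ, fun k => ?_⟩⟩
  simpa only [LinearEquiv.coe_toEquiv, dist_weightedEquiv] using hiter y₀ k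

/-- for small enough step sizes the primal-dual projected gradient operator
of the regularized Lagrangian is a contraction in the weighted norm; hence it has a unique
fixed point and its iterates converge geometrically to it. -/
theorem primalDual_contraction {n m : ℕ}
    (Z : Set (EuclideanSpace ℝ (Fin n)))
    (hZne : Z.Nonempty) (hZcomp : IsCompact Z) (hZconv : Convex ℝ Z)
    (f : EuclideanSpace ℝ (Fin n) → ℝ)
    (f' : EuclideanSpace ℝ (Fin n) → EuclideanSpace ℝ (Fin n))
    (hf : ∀ x, HasGradientAt f (f' x) x)
    (c L : ℝ) (hc : 0 < c)
    (hmono : ∀ x y, c * ‖x - y‖ ^ 2 ≤ ⟪f' x - f' y, x - y⟫_ℝ)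
    (hlip : ∀ x y, ‖f' x - f' y‖ ≤ L * ‖x - y‖)
    (G : Matrix (Fin m) (Fin n) ℝ) (h : EuclideanSpace ℝ (Fin m))
    (φ : ℝ) (hφ : 0 < φ)
    -- nearest-point projections onto Z and onto the nonnegative orthant
    (PZ : EuclideanSpace ℝ (Fin n) → EuclideanSpace ℝ (Fin n))
    (hPZ : ∀ x, PZ x ∈ Z ∧ ∀ y ∈ Z, ‖x - PZ x‖ ≤ ‖x - y‖)
    (Pp : EuclideanSpace ℝ (Fin m) → EuclideanSpace ℝ (Fin m))
    (hPp : ∀ x, (∀ j, 0 ≤ Pp x j) ∧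
      ∀ y : EuclideanSpace ℝ (Fin m), (∀ j, 0 ≤ y j) → ‖x - Pp x‖ ≤ ‖x - y‖) :
    ∃ ε₁max > (0:ℝ), ∃ ε₂max > (0:ℝ), ∀ ε₁ ε₂ : ℝ,
      0 < ε₁ → ε₁ ≤ ε₁max → 0 < ε₂ → ε₂ ≤ ε₂max →
      (∃ Δ : ℝ, 0 ≤ Δ ∧ Δ < 1 ∧
        ∀ y y' : EuclideanSpace ℝ (Fin n) × EuclideanSpace ℝ (Fin m),
          wNorm ε₁ ε₂ (primalDualMap PZ Pp f' G h φ ε₁ ε₂ y -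
              primalDualMap PZ Pp f' G h φ ε₁ ε₂ y') ≤ Δ * wNorm ε₁ ε₂ (y - y')) ∧
      (∃ ys : EuclideanSpace ℝ (Fin n) × EuclideanSpace ℝ (Fin m),
        primalDualMap PZ Pp f' G h φ ε₁ ε₂ ys = ys ∧
        (∀ y', primalDualMap PZ Pp f' G h φ ε₁ ε₂ y' = y' → y' = ys) ∧
        ∀ y0 : EuclideanSpace ℝ (Fin n) × EuclideanSpace ℝ (Fin m),
          ∃ C : ℝ, 0 ≤ C ∧ ∃ Δ : ℝ, 0 < Δ ∧ Δ < 1 ∧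
            ∀ k : ℕ, wNorm ε₁ ε₂ ((primalDualMap PZ Pp f' G h φ ε₁ ε₂)^[k] y0 - ys) ≤
              C * Δ ^ k) :=
  primalDual_contraction_general Z hZconv f' c L hc hmono hlip G h φ hφ PZ hPZ Pp hPp
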